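/- As complex Lie subalgebras of 𝔰𝔬(2n,ℂ), one has 𝔤𝔩(n,ℂ) + 𝔰𝔬(2n-1,ℂ) = 𝔰𝔬(2n,ℂ), where 𝔤𝔩(n,ℂ) is embedded via the complexification of the standard embedding U(n) ⊂ SO(2n) and 𝔰𝔬(2n-1,ℂ) is the subalgebra of matrices whose last row and column vanish. -/

import Mathlib

/-!
Let `J` be the complex structure and `e` the last basis vector. A skew matrix `M` can be corrected
by an element `A` of `𝔤𝔩(n,ℂ)` (a skew matrix commuting with `J`) with `A e = M e`; then `M - A` is
skew and kills `e`, so it lies in `𝔰𝔬(2n-1,ℂ)`. To build `A`, put `v = M e` (orthogonal to `e`) and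
`Y = v eᵀ - e vᵀ`. Since `J² = -1`, `Y - J Y J` commutes with `J`; it sends `e` to
`v + ⟨v, J e⟩ J e`. The surplus is removed by `J E + E J` with `E = e eᵀ`, which also commutes with
`J` and sends `e` to `J e`.
-/

open Matrix

/-- The block-diagonal complex structure `J` on `ℂ^{2n}`, with `2×2` blocks `[[0,-1],[1,0]]`.
The image of `𝔤𝔩(n,ℂ)` in `𝔰𝔬(2n,ℂ)` (the complexification of `𝔲(n) ⊂ 𝔰𝔬(2n)` given by
writing `a+bi` as the real block `[[a,-b],[b,a]]`) consists exactly of the skew-symmetric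
matrices commuting with `J`. -/
def stdJ (n : ℕ) : Matrix (Fin (2 * n)) (Fin (2 * n)) ℂ :=
  Matrix.of fun i j =>
    if (i : ℕ) = (j : ℕ) + 1 ∧ (j : ℕ) % 2 = 0 then 1
    else if (j : ℕ) = (i : ℕ) + 1 ∧ (i : ℕ) % 2 = 0 then -1 else 0

section SkewCommute

variable {ι R : Type*} [CommRing R]

theorem transpose_vecMulVec_sub_vecMulVec (x y : ι → R) :
    (vecMulVec x y - vecMulVec y x)ᵀ = -(vecMulVec x y - vecMulVec y x) := by
  rw [transpose_sub, transpose_vecMulVec, transpose_vecMulVec, neg_sub]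

variable [Fintype ι]

theorem dotProduct_mulVec_self_eq_zero [IsAddTorsionFree R] {M : Matrix ι ι R} (hM : Mᵀ = -M)
    (v : ι → R) : v ⬝ᵥ M *ᵥ v = 0 := by
  refine self_eq_neg.mp ?_
  calc v ⬝ᵥ M *ᵥ v = Mᵀ *ᵥ v ⬝ᵥ v := by rw [dotProduct_mulVec, mulVec_transpose]
    _ = -(v ⬝ᵥ M *ᵥ v) := by rw [hM, neg_mulVec, neg_dotProduct, dotProduct_comm]

variable {J : Matrix ι ι R}

theorem transpose_sub_mul_mul (hJ : Jᵀ = -J) {X : Matrix ι ι R} (hX : Xᵀ = -X) :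
    (X - J * X * J)ᵀ = -(X - J * X * J) := by
  simp only [transpose_sub, transpose_mul, hJ, hX, neg_mul, mul_neg, neg_neg, Matrix.mul_assoc]
  abel

variable [DecidableEq ι]

theorem commute_sub_mul_mul (hJJ : J * J = -1) (X : Matrix ι ι R) :
    Commute J (X - J * X * J) := by
  have h1 : J * (J * X * J) = -(X * J) := by
    rw [← Matrix.mul_assoc, ← Matrix.mul_assoc, hJJ, neg_one_mul, neg_mul]
  have h2 : J * X * J * J = -(J * X) := by
    rw [Matrix.mul_assoc, hJJ, mul_neg_one]
  rw [Commute, SemiconjBy, mul_sub, sub_mul, h1, h2]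
  abel

theorem exists_transpose_eq_neg_commute_mulVec_eq [IsAddTorsionFree R] (hJ : Jᵀ = -J)
    (hJJ : J * J = -1) {e v : ι → R} (he : e ⬝ᵥ e = 1) (hv : v ⬝ᵥ e = 0) :
    ∃ A : Matrix ι ι R, Aᵀ = -A ∧ Commute J A ∧ A *ᵥ e = v := by
  have hef : e ⬝ᵥ J *ᵥ e = 0 := dotProduct_mulVec_self_eq_zero hJ e
  let Y := vecMulVec v e - vecMulVec e v
  let Z := J * vecMulVec e e + vecMulVec e e * J
  have hY : Yᵀ = -Y := transpose_vecMulVec_sub_vecMulVec v e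
  have hZ : Z = J * vecMulVec e e - J * (J * vecMulVec e e) * J := by
    rw [← Matrix.mul_assoc, hJJ, neg_one_mul, neg_mul, sub_neg_eq_add]
  have hZt : Zᵀ = -Z := by
    simp only [Z, transpose_add, transpose_mul, transpose_vecMulVec, hJ, mul_neg, neg_mul]
    abel
  have hYe : (Y - J * Y * J) *ᵥ e = v + (v ⬝ᵥ J *ᵥ e) • J *ᵥ e := by
    simp only [Y, sub_mulVec, ← mulVec_mulVec, vecMulVec_mulVec, op_smul_eq_smul, he, hv, hef,
      one_smul, zero_smul, sub_zero, zero_sub, mulVec_neg, mulVec_smul, sub_neg_eq_add]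
  have hZe : Z *ᵥ e = J *ᵥ e := by
    simp only [Z, add_mulVec, ← mulVec_mulVec, vecMulVec_mulVec, op_smul_eq_smul, he, hef,
      one_smul, zero_smul, add_zero]
  refine ⟨(Y - J * Y * J) - (v ⬝ᵥ J *ᵥ e) • Z, ?_, ?_, ?_⟩
  · rw [transpose_sub, transpose_smul, transpose_sub_mul_mul hJ hY, hZt, smul_neg]
    abel
  · exact (commute_sub_mul_mul hJJ Y).sub_right (hZ ▸ (commute_sub_mul_mul hJJ _).smul_right _)
  · rw [sub_mulVec, smul_mulVec, hYe, hZe, add_sub_cancel_right]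

theorem exists_add_commute_mulVec_eq_zero_of_transpose_eq_neg [IsAddTorsionFree R]
    (hJ : Jᵀ = -J) (hJJ : J * J = -1) {e : ι → R} (he : e ⬝ᵥ e = 1) {M : Matrix ι ι R}
    (hM : Mᵀ = -M) :
    ∃ A B : Matrix ι ι R, M = A + B ∧ Aᵀ = -A ∧ Commute J A ∧ Bᵀ = -B ∧ B *ᵥ e = 0 := by
  have hMe : M *ᵥ e ⬝ᵥ e = 0 := by rw [dotProduct_comm, dotProduct_mulVec_self_eq_zero hM]
  obtain ⟨A, hA, hJA, hAe⟩ := exists_transpose_eq_neg_commute_mulVec_eq hJ hJJ he hMe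
  refine ⟨A, M - A, (add_sub_cancel A M).symm, hA, hJA, ?_, ?_⟩
  · rw [transpose_sub, hM, hA, neg_sub_neg, neg_sub]
  · rw [sub_mulVec, hAe, sub_self]

end SkewCommute

namespace stdJ

variable {n : ℕ}

def partner (i : Fin (2 * n)) : Fin (2 * n) :=
  ⟨if (i : ℕ) % 2 = 0 then i + 1 else i - 1, by split_ifs <;> omega⟩

theorem partner_partner (i : Fin (2 * n)) : partner (partner i) = i := by
  ext; simp only [partner]; split_ifs <;> omega

theorem apply_eq (i j : Fin (2 * n)) :
    stdJ n i j = if j = partner i then (if (i : ℕ) % 2 = 0 then -1 else 1) else 0 := by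
  simp only [stdJ, of_apply, partner, Fin.ext_iff]
  split_ifs <;> first | rfl | omega

theorem transpose : (stdJ n)ᵀ = -stdJ n := by
  ext i j
  rw [transpose_apply, neg_apply]
  simp only [stdJ, of_apply]
  split_ifs <;> first | omega | norm_num

theorem mul_self : stdJ n * stdJ n = -1 := by
  ext i j
  rw [mul_apply, Finset.sum_eq_single (partner i)]
  · rw [neg_apply, one_apply, apply_eq, apply_eq, partner_partner]
    simp only [partner, eq_comm (a := j)]
    split_ifs <;> first | omega | norm_num
  · intro k _ hk
    rw [apply_eq i k, if_neg hk, zero_mul]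
  · simp

end stdJ

/-- `𝔤𝔩(n,ℂ) + 𝔰𝔬(2n-1,ℂ) = 𝔰𝔬(2n,ℂ)`: every complex skew-symmetric `2n × 2n` matrix is a sum
of a skew-symmetric matrix commuting with `J` (an element of the embedded `𝔤𝔩(n,ℂ)`) and a
skew-symmetric matrix whose last row and column vanish (an element of `𝔰𝔬(2n-1,ℂ)`). -/
theorem gl_add_so_eq_so (n : ℕ) (hn : 1 ≤ n) :
    {M : Matrix (Fin (2 * n)) (Fin (2 * n)) ℂ | Mᵀ = -M} =
    {M : Matrix (Fin (2 * n)) (Fin (2 * n)) ℂ |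
      ∃ A B : Matrix (Fin (2 * n)) (Fin (2 * n)) ℂ, M = A + B ∧
        Aᵀ = -A ∧ A * stdJ n = stdJ n * A ∧
        Bᵀ = -B ∧
        (∀ i : Fin (2 * n), B i ⟨2 * n - 1, by omega⟩ = 0 ∧ B ⟨2 * n - 1, by omega⟩ i = 0)} := by
  ext M
  constructor
  · intro (hM : Mᵀ = -M)
    obtain ⟨A, B, hMAB, hA, hJA, hB, hBe⟩ :=
      exists_add_commute_mulVec_eq_zero_of_transpose_eq_neg stdJ.transpose stdJ.mul_self
        (e := Pi.single ⟨2 * n - 1, by omega⟩ 1) (by simp) hM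
    refine ⟨A, B, hMAB, hA, hJA.eq.symm, hB, fun i => ?_⟩
    have hcol : B i ⟨2 * n - 1, by omega⟩ = 0 := by
      simpa only [mulVec_single_one, col_apply, Pi.zero_apply] using congrFun hBe i
    refine ⟨hcol, ?_⟩
    rw [← transpose_apply B, hB, Matrix.neg_apply, hcol, neg_zero]
  · rintro ⟨A, B, rfl, hA, -, hB, -⟩
    show (A + B)ᵀ = -(A + B)
    rw [transpose_add, hA, hB, neg_add]
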